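/- arXiv:2511.19522 — 8 statements merged into one kernel-verified Lean document; each statement's English description precedes it below -/
import Mathlib

section
/- If a directed graph G on at least 2 vertices is 1-robust, then G contains a rooted spanning tree (i.e., there exists a vertex from which every other vertex is reachable by a directed path). -/
/-- A nonempty subset `Q` is `r`-reachable if some vertex in `Q` has at least `r`
in-neighbors outside `Q`. Edge `E j i` means a directed edge from `j` to `i`. -/
def rReachable {V : Type*} (E : V → V → Prop) (r : ℕ) (Q : Set V) : Prop :=
  ∃ i ∈ Q, r ≤ {j | j ∉ Q ∧ E j i}.ncard

/-- A directed graph is `r`-robust if for every pair of nonempty disjoint vertex subsets,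
at least one of them is `r`-reachable. -/
def rRobust {V : Type*} (E : V → V → Prop) (r : ℕ) : Prop :=
  ∀ Qa Qb : Set V, Qa.Nonempty → Qb.Nonempty → Disjoint Qa Qb →
    rReachable E r Qa ∨ rReachable E r Qb

/-!
The set of ancestors of a vertex `v` (the vertices from which `v` is reachable) has no
in-neighbours outside itself, so it is not `r`-reachable for any `r ≠ 0`. Robustness therefore
forbids two disjoint ancestor sets: any two vertices have a common ancestor. On a finite vertex
set this directedness of reachability produces one vertex that reaches all others.
-/

section

variable {V : Type*} {E : V → V → Prop} {r : ℕ}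

theorem rReachable.exists_edge_into {Q : Set V} (hQ : rReachable E r Q) (hr : r ≠ 0) :
    ∃ i ∈ Q, ∃ j ∉ Q, E j i := by
  obtain ⟨i, hi, hle⟩ := hQ
  obtain ⟨j, hjQ, hji⟩ := Set.nonempty_of_ncard_ne_zero
    (s := {j | j ∉ Q ∧ E j i}) (by omega)
  exact ⟨i, hi, j, hjQ, hji⟩

theorem not_rReachable_of_forall_edge_mem {Q : Set V} (hQ : ∀ i ∈ Q, ∀ j, E j i → j ∈ Q)
    (hr : r ≠ 0) : ¬ rReachable E r Q := fun hreach =>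
  let ⟨i, hi, j, hjQ, hji⟩ := hreach.exists_edge_into hr
  hjQ (hQ i hi j hji)

theorem not_rReachable_ancestors (v : V) (hr : r ≠ 0) :
    ¬ rReachable E r {u | Relation.ReflTransGen E u v} :=
  not_rReachable_of_forall_edge_mem (fun _ hi _ hji => Relation.ReflTransGen.head hji hi) hr

theorem rRobust.exists_common_ancestor (h : rRobust E r) (hr : r ≠ 0) (v w : V) :
    ∃ u, Relation.ReflTransGen E u v ∧ Relation.ReflTransGen E u w := by
  by_contra! hdisj
  rcases h {u | Relation.ReflTransGen E u v} {u | Relation.ReflTransGen E u w}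
      ⟨v, .refl⟩ ⟨w, .refl⟩ (Set.disjoint_left.mpr hdisj) with hv | hw
  · exact not_rReachable_ancestors v hr hv
  · exact not_rReachable_ancestors w hr hw

theorem rRobust.exists_root [Finite V] [Nonempty V] (h : rRobust E r) (hr : r ≠ 0) :
    ∃ root : V, ∀ i : V, Relation.ReflTransGen E root i :=
  have : IsTrans V (flip (Relation.ReflTransGen E)) :=
    ⟨fun _ _ _ hab hbc => Relation.ReflTransGen.trans hbc hab⟩
  Directed.finite_le (r := flip (Relation.ReflTransGen E)) (f := id)
    (h.exists_common_ancestor hr) id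

end

/-- A 1-robust directed graph on at least 2 vertices contains a rooted spanning tree:
some vertex reaches every other vertex by a directed path. -/
theorem one_robust_rooted_spanning_tree {V : Type*} [Fintype V] (E : V → V → Prop)
    (hcard : 2 ≤ Fintype.card V) (h : rRobust E 1) :
    ∃ root : V, ∀ i : V, Relation.ReflTransGen E root i := by
  have : Nonempty V := Fintype.card_pos_iff.mp (by omega)
  exact h.exists_root one_ne_zero
end

section
/- Let G be an (F+1)-robust graph on vertex set V and let B ⊆ V be a set of 'Byzantine' vertices such that every vertex in V has at most F in-neighbors belonging to B. Then the subgraph of G induced on the normal vertices A = V \ B is 1-robust. -/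
section

variable {V : Type*} {E : V → V → Prop}

theorem rReachable_one_iff [Finite V] {Q : Set V} :
    rReachable E 1 Q ↔ ∃ i ∈ Q, ∃ j, j ∉ Q ∧ E j i :=
  exists_congr fun _ => and_congr_right fun _ => Set.ncard_pos

theorem rRobust.of_subtype {S : Set V} {E' : S → S → Prop} {r s : ℕ} (h : rRobust E r)
    (hlift : ∀ Q : Set S, rReachable E r (Subtype.val '' Q) → rReachable E' s Q) :
    rRobust E' s := by
  intro Qa Qb hQa hQb hdisj
  have hdisj' : Disjoint (Subtype.val '' Qa) (Subtype.val '' Qb) :=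
    (Set.disjoint_image_iff Subtype.val_injective).mpr hdisj
  exact (h _ _ (hQa.image _) (hQb.image _) hdisj').imp (hlift Qa) (hlift Qb)

theorem exists_inNeighbor_notMem_of_ncard_lt [Finite V] {B Q : Set V} {i : V}
    (hlt : {j | j ∈ B ∧ E j i}.ncard < {j | j ∉ Q ∧ E j i}.ncard) :
    ∃ j, j ∉ B ∧ j ∉ Q ∧ E j i := by
  obtain ⟨j, ⟨hjQ, hji⟩, hjB⟩ := Set.exists_mem_notMem_of_ncard_lt_ncard hlt
  exact ⟨j, fun hB => hjB ⟨hB, hji⟩, hjQ, hji⟩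

theorem rReachable_one_compl_of_rReachable_succ [Finite V] {B : Set V} {F : ℕ}
    (hF : ∀ i : V, {j | j ∈ B ∧ E j i}.ncard ≤ F) {Q : Set ↥(Bᶜ : Set V)}
    (hQ : rReachable E (F + 1) (Subtype.val '' Q)) :
    rReachable (fun j i : ↥(Bᶜ : Set V) => E (j : V) (i : V)) 1 Q := by
  obtain ⟨_, ⟨i, hiQ, rfl⟩, hcard⟩ := hQ
  obtain ⟨j, hjB, hjQ, hji⟩ :=
    exists_inNeighbor_notMem_of_ncard_lt (Nat.lt_of_le_of_lt (hF i) hcard)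
  exact rReachable_one_iff.mpr ⟨i, hiQ, ⟨j, hjB⟩, fun hj => hjQ ⟨_, hj, rfl⟩, hji⟩

end

/-- If `G` is `(F+1)`-robust and every vertex has at most `F` in-neighbors
belonging to the Byzantine set `B`, then the subgraph induced on the normal
vertices `A = V \ B` is `1`-robust. -/
theorem induced_normal_one_robust {V : Type*} [Fintype V] (E : V → V → Prop)
    (F : ℕ) (B : Set V)
    (hrob : rRobust E (F + 1))
    (hF : ∀ i : V, {j | j ∈ B ∧ E j i}.ncard ≤ F) :
    rRobust (fun j i : ↥(Bᶜ : Set V) => E (j : V) (i : V)) 1 :=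
  hrob.of_subtype fun _ => rReachable_one_compl_of_rReachable_succ hF
end

section
/- Let G be an (F+1)-robust undirected graph and B a set of vertices with |N(i) ∩ B| ≤ F for every vertex i (F-local model). Then the subgraph induced on V \ B is connected (assuming V \ B is nonempty). -/
/-!
Every neighbor of an honest vertex that lies outside its connected component of `G[V \ B]` is
Byzantine, so no such component is `(F+1)`-reachable. Two distinct components would therefore be
a pair of disjoint sets violating `(F+1)`-robustness.
-/

/-- A nonempty vertex subset `Q` of an undirected graph is `r`-reachable if some vertex
in `Q` has at least `r` neighbors outside `Q`. -/
def rReachableU {V : Type*} (G : SimpleGraph V) (r : ℕ) (Q : Set V) : Prop :=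
  ∃ i ∈ Q, r ≤ (G.neighborSet i \ Q).ncard

/-- An undirected graph is `r`-robust if for every pair of nonempty disjoint vertex
subsets, at least one of them is `r`-reachable. -/
def rRobustU {V : Type*} (G : SimpleGraph V) (r : ℕ) : Prop :=
  ∀ Qa Qb : Set V, Qa.Nonempty → Qb.Nonempty → Disjoint Qa Qb →
    rReachableU G r Qa ∨ rReachableU G r Qb

namespace SimpleGraph

variable {V : Type*} {G : SimpleGraph V} {s : Set V}

lemma ConnectedComponent.neighborSet_diff_image_supp_subset
    (c : (G.induce s).ConnectedComponent) {i : V} (hi : i ∈ Subtype.val '' c.supp) :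
    G.neighborSet i \ Subtype.val '' c.supp ⊆ G.neighborSet i \ s := by
  obtain ⟨i, hic, rfl⟩ := hi
  rintro j ⟨hij, hjc⟩
  refine ⟨hij, fun hjs => hjc ⟨⟨j, hjs⟩, ?_, rfl⟩⟩
  exact (c.mem_supp_congr_adj (by simpa using hij)).1 hic

lemma ConnectedComponent.not_rReachableU_image_supp [Finite V] {F : ℕ}
    (hF : ∀ i ∈ s, (G.neighborSet i \ s).ncard ≤ F) (c : (G.induce s).ConnectedComponent) :
    ¬ rReachableU G (F + 1) (Subtype.val '' c.supp) := by
  rintro ⟨i, hi, hcard⟩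
  have hle := Set.ncard_le_ncard (c.neighborSet_diff_image_supp_subset hi) (Set.toFinite _)
  obtain ⟨i, -, rfl⟩ := hi
  have := hF i i.2
  omega

theorem preconnected_induce_of_rRobustU [Finite V] {F : ℕ} (hrob : rRobustU G (F + 1))
    (hF : ∀ i ∈ s, (G.neighborSet i \ s).ncard ≤ F) : (G.induce s).Preconnected := by
  intro u v
  by_contra huv
  set cu := (G.induce s).connectedComponentMk u
  set cv := (G.induce s).connectedComponentMk v
  have hne : cu ≠ cv := fun h => huv (ConnectedComponent.exact h)
  have hdisj : Disjoint (Subtype.val '' cu.supp) (Subtype.val '' cv.supp) :=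
    (Set.disjoint_image_iff Subtype.val_injective).2
      (pairwise_disjoint_supp_connectedComponent _ hne)
  rcases hrob _ _ ⟨u, Set.mem_image_of_mem _ ConnectedComponent.connectedComponentMk_mem⟩
    ⟨v, Set.mem_image_of_mem _ ConnectedComponent.connectedComponentMk_mem⟩ hdisj with h | h
  exacts [cu.not_rReachableU_image_supp hF h, cv.not_rReachableU_image_supp hF h]

end SimpleGraph

/-- If `G` is `(F+1)`-robust and every vertex has at most `F` neighbors in the
Byzantine set `B` (F-local model), then the subgraph induced on `V \ B` is connected. -/
theorem induced_normal_connected {V : Type*} [Fintype V] (G : SimpleGraph V)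
    (F : ℕ) (B : Set V)
    (hrob : rRobustU G (F + 1))
    (hF : ∀ i : V, (G.neighborSet i ∩ B).ncard ≤ F)
    (hA : (Bᶜ : Set V).Nonempty) :
    (G.induce (Bᶜ : Set V)).Connected := by
  refine (SimpleGraph.connected_iff _).2
    ⟨SimpleGraph.preconnected_induce_of_rRobustU hrob fun i _ => ?_, hA.to_subtype⟩
  rw [Set.sdiff_compl]
  exact hF i
end

section
/- Let L be the Laplacian matrix of a connected undirected graph on n vertices with nonnegative edge weights, and let D be a nonzero diagonal matrix with nonnegative entries. Then the smallest eigenvalue λ₁ of the perturbed Laplacian L_B = L + D is strictly positive, is a simple eigenvalue, and admits an eigenvector with all entries strictly positive. -/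
open Matrix

private theorem quadForm_eq {n : ℕ} (A : Matrix (Fin n) (Fin n) ℝ) (hs : ∀ i j, A j i = A i j)
    (b : Fin n → ℝ) (x : Fin n → ℝ) :
    ((Matrix.diagonal (fun i => ∑ j, A i j) - A + Matrix.diagonal b) *ᵥ x) ⬝ᵥ x
      = (∑ i, ∑ j, A i j * (x i - x j) ^ 2) / 2 + ∑ i, b i * x i ^ 2 := by
  have swap : ∑ i, ∑ j, A i j * x j ^ 2 = ∑ i, ∑ j, A i j * x i ^ 2 := by
    rw [Finset.sum_comm]
    exact Finset.sum_congr rfl fun i _ => Finset.sum_congr rfl fun j _ => by rw [hs]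
  have expand : ∑ i, ∑ j, A i j * (x i - x j) ^ 2
      = ∑ i, ∑ j, A i j * x i ^ 2 + ∑ i, ∑ j, A i j * x j ^ 2
        - 2 * ∑ i, ∑ j, A i j * x j * x i := by
    rw [Finset.mul_sum]
    simp_rw [Finset.mul_sum]
    rw [← Finset.sum_add_distrib, ← Finset.sum_sub_distrib]
    refine Finset.sum_congr rfl fun i _ => ?_
    rw [← Finset.sum_add_distrib, ← Finset.sum_sub_distrib]
    exact Finset.sum_congr rfl fun j _ => by ring
  have hmv : ∀ i, ((Matrix.diagonal (fun i => ∑ j, A i j) - A + Matrix.diagonal b) *ᵥ x) i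
      = (∑ j, A i j) * x i - (∑ j, A i j * x j) + b i * x i := by
    intro i
    rw [Matrix.add_mulVec, Matrix.sub_mulVec]
    have hd : ∀ (v : Fin n → ℝ), ∑ j, Matrix.diagonal v i j * x j = v i * x i := by
      intro v
      rw [Finset.sum_eq_single i]
      · rw [Matrix.diagonal_apply_eq]
      · intro j _ hj
        rw [Matrix.diagonal_apply_ne _ (Ne.symm hj), zero_mul]
      · intro h; exact absurd (Finset.mem_univ i) h
    simp only [Matrix.mulVec, dotProduct, Pi.add_apply, Pi.sub_apply]
    rw [hd, hd]
  have hlhs : ((Matrix.diagonal (fun i => ∑ j, A i j) - A + Matrix.diagonal b) *ᵥ x) ⬝ᵥ x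
      = ∑ i, ∑ j, A i j * x i ^ 2 - ∑ i, ∑ j, A i j * x j * x i + ∑ i, b i * x i ^ 2 := by
    unfold dotProduct
    simp_rw [hmv, add_mul, sub_mul]
    rw [Finset.sum_add_distrib, Finset.sum_sub_distrib]
    congr 1
    congr 1
    · refine Finset.sum_congr rfl fun i _ => ?_
      rw [Finset.sum_mul, Finset.sum_mul]
      exact Finset.sum_congr rfl fun j _ => by ring
    · exact Finset.sum_congr rfl fun i _ => by rw [Finset.sum_mul]
    · exact Finset.sum_congr rfl fun i _ => by ring
  rw [hlhs, expand, swap]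
  ring

/-- For the Laplacian `L = diag(A·1) − A` of a connected weighted undirected graph with
nonnegative weights, and a nonzero nonnegative diagonal perturbation `D = diag b`, the
smallest eigenvalue of `L + D` is strictly positive, simple, and has a strictly positive
eigenvector. -/
theorem perturbed_laplacian_smallest_eigenvalue {n : ℕ} (hn : 0 < n)
    (A : Matrix (Fin n) (Fin n) ℝ)
    (hsymm : A.IsSymm)
    (hnonneg : ∀ i j, 0 ≤ A i j)
    (hconn : ∀ i j : Fin n, Relation.ReflTransGen (fun a b => 0 < A a b) i j)
    (b : Fin n → ℝ) (hb : ∀ i, 0 ≤ b i) (hbne : b ≠ 0)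
    (L : Matrix (Fin n) (Fin n) ℝ)
    (hL : L = Matrix.diagonal (fun i => ∑ j, A i j) - A) :
    ∃ (lam : ℝ) (v : Fin n → ℝ),
      0 < lam ∧
      (L + Matrix.diagonal b) *ᵥ v = lam • v ∧
      (∀ i, 0 < v i) ∧
      (∀ (μ : ℝ) (w : Fin n → ℝ), w ≠ 0 →
        (L + Matrix.diagonal b) *ᵥ w = μ • w → lam ≤ μ) ∧
      (∀ w : Fin n → ℝ, (L + Matrix.diagonal b) *ᵥ w = lam • w → ∃ c : ℝ, w = c • v) := by
  classical
  set M := L + Matrix.diagonal b with hMdef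
  have hMeq : M = Matrix.diagonal (fun i => ∑ j, A i j) - A + Matrix.diagonal b := by
    rw [hMdef, hL]
  have hs : ∀ i j, A j i = A i j := by
    intro i j
    have := congrFun (congrFun hsymm i) j
    simpa [Matrix.transpose_apply] using this
  -- quadratic form
  have hQ : ∀ x : Fin n → ℝ, (M *ᵥ x) ⬝ᵥ x
      = (∑ i, ∑ j, A i j * (x i - x j) ^ 2) / 2 + ∑ i, b i * x i ^ 2 := by
    intro x; rw [hMeq]; exact quadForm_eq A hs b x
  have hQ0 : ∀ x : Fin n → ℝ, 0 ≤ (M *ᵥ x) ⬝ᵥ x := by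
    intro x
    rw [hQ]
    have h1 : (0:ℝ) ≤ ∑ i, ∑ j, A i j * (x i - x j) ^ 2 :=
      Finset.sum_nonneg fun i _ => Finset.sum_nonneg fun j _ =>
        mul_nonneg (hnonneg i j) (sq_nonneg _)
    have h2 : (0:ℝ) ≤ ∑ i, b i * x i ^ 2 :=
      Finset.sum_nonneg fun i _ => mul_nonneg (hb i) (sq_nonneg _)
    linarith
  have hQpos : ∀ x : Fin n → ℝ, x ≠ 0 → 0 < (M *ᵥ x) ⬝ᵥ x := by
    intro x hx
    rcases lt_or_eq_of_le (hQ0 x) with h | h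
    · exact h
    exfalso
    have h1 : (0:ℝ) ≤ ∑ i, ∑ j, A i j * (x i - x j) ^ 2 :=
      Finset.sum_nonneg fun i _ => Finset.sum_nonneg fun j _ =>
        mul_nonneg (hnonneg i j) (sq_nonneg _)
    have h2 : (0:ℝ) ≤ ∑ i, b i * x i ^ 2 :=
      Finset.sum_nonneg fun i _ => mul_nonneg (hb i) (sq_nonneg _)
    have hQx := (hQ x).symm.trans h.symm
    have hS1 : ∑ i, ∑ j, A i j * (x i - x j) ^ 2 = 0 := by linarith
    have hS2 : ∑ i, b i * x i ^ 2 = 0 := by linarith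
    have hterm1 : ∀ i j : Fin n, A i j * (x i - x j) ^ 2 = 0 := by
      intro i j
      have hi := (Finset.sum_eq_zero_iff_of_nonneg (fun i _ =>
        Finset.sum_nonneg fun j _ => mul_nonneg (hnonneg i j) (sq_nonneg _))).mp hS1 i
        (Finset.mem_univ i)
      exact (Finset.sum_eq_zero_iff_of_nonneg (fun j _ =>
        mul_nonneg (hnonneg i j) (sq_nonneg _))).mp hi j (Finset.mem_univ j)
    have hterm2 : ∀ i : Fin n, b i * x i ^ 2 = 0 := by
      intro i
      exact (Finset.sum_eq_zero_iff_of_nonneg (fun i _ =>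
        mul_nonneg (hb i) (sq_nonneg _))).mp hS2 i (Finset.mem_univ i)
    have hedge : ∀ i j : Fin n, 0 < A i j → x i = x j := by
      intro i j hA
      have := hterm1 i j
      have h2 : (x i - x j) ^ 2 = 0 := by
        rcases mul_eq_zero.mp this with h | h
        · exact absurd h (ne_of_gt hA)
        · exact h
      have := pow_eq_zero_iff (n := 2) (by norm_num) |>.mp h2
      linarith [this]
    have hconst : ∀ i j : Fin n, x i = x j := by
      intro i j
      induction hconn i j with
      | refl => rfl
      | tail _ hbc ih => exact ih.trans (hedge _ _ hbc)
    obtain ⟨i0, hi0⟩ := Function.ne_iff.mp hbne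
    have hbi0 : 0 < b i0 := lt_of_le_of_ne (hb i0) (Ne.symm hi0)
    have hxi0 : x i0 = 0 := by
      have := hterm2 i0
      have h2 : x i0 ^ 2 = 0 := by
        rcases mul_eq_zero.mp this with h | h
        · exact absurd h (ne_of_gt hbi0)
        · exact h
      exact pow_eq_zero_iff (n := 2) (by norm_num) |>.mp h2
    apply hx
    funext j
    have := hconst i0 j
    rw [← this, hxi0]; rfl
  -- Euclidean space setup
  set e := WithLp.equiv 2 (Fin n → ℝ) with he
  set T := Matrix.toEuclideanCLM (𝕜 := ℝ) M with hTdef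
  have hT : ∀ x : Fin n → ℝ, T (e.symm x) = e.symm (M *ᵥ x) := by
    intro x; simp [hTdef, he, Matrix.toLin'_apply]
  have hf : ∀ x : Fin n → ℝ, T.reApplyInnerSelf (e.symm x) = (M *ᵥ x) ⬝ᵥ x := by
    intro x
    rw [ContinuousLinearMap.reApplyInnerSelf_apply, hT]
    simp [PiLp.inner_apply, dotProduct, he]; exact Finset.sum_congr rfl fun i _ => mul_comm _ _
  have hnorm : ∀ x : Fin n → ℝ, ‖e.symm x‖ ^ 2 = ∑ i, x i ^ 2 := by
    intro x
    rw [EuclideanSpace.norm_eq, Real.sq_sqrt (by positivity)]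
    simp [sq_abs, he]
  have hMsymm : Mᵀ = M := by
    rw [hMeq]
    rw [Matrix.transpose_add, Matrix.transpose_sub, Matrix.diagonal_transpose,
      Matrix.diagonal_transpose, hsymm.eq]
  have hTsa : IsSelfAdjoint T := by
    have hM : star M = M := by
      simp only [Matrix.star_eq_conjTranspose]
      ext i j
      simpa using congrFun (congrFun hMsymm i) j
    show star _ = _
    rw [hTdef, ← map_star, hM]
  -- minimizer on the unit sphere
  obtain ⟨x₀, hx₀S, hx₀min⟩ :
      ∃ x₀ ∈ Metric.sphere (0 : EuclideanSpace ℝ (Fin n)) 1,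
        IsMinOn T.reApplyInnerSelf (Metric.sphere 0 1) x₀ :=
    (isCompact_sphere 0 1).exists_isMinOn
      ⟨EuclideanSpace.single ⟨0, hn⟩ 1, by simp⟩
      T.reApplyInnerSelf_continuous.continuousOn
  have hx₀norm : ‖x₀‖ = 1 := by simpa using hx₀S
  have hx₀ne : x₀ ≠ 0 := by
    intro h; rw [h] at hx₀norm; simp at hx₀norm
  set lam := T.reApplyInnerSelf x₀ with hlam
  -- global lower bound for the quadratic form
  have hmin : ∀ y : EuclideanSpace ℝ (Fin n), lam * ‖y‖ ^ 2 ≤ T.reApplyInnerSelf y := by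
    intro y
    rcases eq_or_ne y 0 with h | h
    · simp [h, ContinuousLinearMap.reApplyInnerSelf_apply]
    · have hy : ‖y‖ ≠ 0 := norm_ne_zero_iff.mpr h
      have hy0 : 0 < ‖y‖ := norm_pos_iff.mpr h
      have hsm : T.reApplyInnerSelf ((‖y‖⁻¹ : ℝ) • y) = ‖y‖⁻¹ ^ 2 * T.reApplyInnerSelf y := by
        rw [T.reApplyInnerSelf_smul]
        congr 1
        rw [Real.norm_eq_abs, abs_of_nonneg (by positivity)]
      have hmem : (‖y‖⁻¹ : ℝ) • y ∈ Metric.sphere (0 : EuclideanSpace ℝ (Fin n)) 1 := by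
        simp [norm_smul, abs_of_nonneg (le_of_lt (inv_pos.mpr hy0)), inv_mul_cancel₀ hy]
      have hb1 : lam ≤ T.reApplyInnerSelf ((‖y‖⁻¹ : ℝ) • y) := hx₀min hmem
      rw [hsm] at hb1
      have := mul_le_mul_of_nonneg_right hb1 (le_of_lt (mul_pos hy0 hy0))
      calc lam * ‖y‖ ^ 2 = lam * (‖y‖ * ‖y‖) := by ring
        _ ≤ ‖y‖⁻¹ ^ 2 * T.reApplyInnerSelf y * (‖y‖ * ‖y‖) := this
        _ = T.reApplyInnerSelf y := by field_simp
  have hx₀min' : IsMinOn T.reApplyInnerSelf (Metric.sphere 0 ‖x₀‖) x₀ := by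
    rw [hx₀norm]; exact hx₀min
  -- eigenvalue extraction helper
  have heigval : ∀ (z : EuclideanSpace ℝ (Fin n)) (c : ℝ), z ≠ 0 → T z = c • z →
      T.reApplyInnerSelf z = c * ‖z‖ ^ 2 := by
    intro z c hz hTz
    rw [ContinuousLinearMap.reApplyInnerSelf_apply, hTz, real_inner_smul_left,
      real_inner_self_eq_norm_sq]
    rfl
  -- x₀ is an eigenvector with eigenvalue lam
  have hev := hTsa.hasEigenvector_of_isMinOn hx₀ne hx₀min'
  have hTx₀ : T x₀ = lam • x₀ := by
    have h1 := hev.apply_eq_smul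
    have h2 := heigval x₀ _ hx₀ne h1
    rw [hx₀norm, one_pow, mul_one] at h2
    rw [hlam, h2]
    exact h1
  -- key lemma: eigenvectors for lam have strictly positive absolute value which is
  -- again an eigenvector
  have key : ∀ w : Fin n → ℝ, w ≠ 0 → M *ᵥ w = lam • w →
      (M *ᵥ (fun i => |w i|) = lam • (fun i => |w i|)) ∧ (∀ i, 0 < |w i|) := by
    intro w hw hMw
    set aw : Fin n → ℝ := fun i => |w i| with haw
    have hawne : aw ≠ 0 := by
      intro h
      apply hw
      funext i
      have := congrFun h i
      simp only [haw, Pi.zero_apply] at this ⊢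
      exact abs_eq_zero.mp this
    have hsum_eq : ∑ i, aw i ^ 2 = ∑ i, w i ^ 2 := by
      exact Finset.sum_congr rfl fun i _ => by rw [haw]; simp [sq_abs]
    have hsumpos : 0 < ∑ i, w i ^ 2 := by
      obtain ⟨k, hk⟩ := Function.ne_iff.mp hw
      simp only [Pi.zero_apply] at hk
      refine Finset.sum_pos' (fun i _ => sq_nonneg _) ⟨k, Finset.mem_univ k, ?_⟩
      exact sq_abs (w k) ▸ pow_pos (abs_pos.mpr hk) 2
    have hQw : (M *ᵥ w) ⬝ᵥ w = lam * ∑ i, w i ^ 2 := by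
      rw [hMw]
      simp only [dotProduct, Pi.smul_apply, smul_eq_mul, Finset.mul_sum]
      exact Finset.sum_congr rfl fun i _ => by ring
    have hQaw_le : (M *ᵥ aw) ⬝ᵥ aw ≤ (M *ᵥ w) ⬝ᵥ w := by
      rw [hQ, hQ]
      have h1 : ∑ i, ∑ j, A i j * (aw i - aw j) ^ 2 ≤ ∑ i, ∑ j, A i j * (w i - w j) ^ 2 := by
        refine Finset.sum_le_sum fun i _ => Finset.sum_le_sum fun j _ => ?_
        refine mul_le_mul_of_nonneg_left ?_ (hnonneg i j)
        rw [← sq_abs (w i - w j)]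
        apply sq_le_sq'
        · have := abs_sub_abs_le_abs_sub (w j) (w i)
          rw [abs_sub_comm (w j) (w i)] at this
          simp only [haw]
          linarith
        · simpa [haw] using abs_sub_abs_le_abs_sub (w i) (w j)
      have h2 : ∑ i, b i * aw i ^ 2 = ∑ i, b i * w i ^ 2 := by
        exact Finset.sum_congr rfl fun i _ => by simp [haw, sq_abs]
      linarith
    have hznorm : ‖e.symm aw‖ ^ 2 = ∑ i, w i ^ 2 := by rw [hnorm, hsum_eq]
    have hzne : e.symm aw ≠ 0 := by
      intro h
      apply hawne
      have := congrArg e h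
      simpa [he] using this
    have hfz : T.reApplyInnerSelf (e.symm aw) = lam * ‖e.symm aw‖ ^ 2 := by
      refine le_antisymm ?_ (hmin _)
      rw [hf, hznorm, ← hQw]
      exact hQaw_le
    have hminz : IsMinOn T.reApplyInnerSelf (Metric.sphere 0 ‖e.symm aw‖) (e.symm aw) := by
      intro y hy
      have hyn : ‖y‖ = ‖e.symm aw‖ := by simpa using hy
      have := hmin y
      rw [hyn] at this
      simp only [Set.mem_setOf_eq]
      rw [hfz]
      linarith
    have hev2 := hTsa.hasEigenvector_of_isMinOn hzne hminz
    have hzeq : T (e.symm aw) = lam • (e.symm aw) := by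
      have h1 := hev2.apply_eq_smul
      have h2 := heigval _ _ hzne h1
      rw [hfz] at h2
      have hnz : ‖e.symm aw‖ ^ 2 ≠ 0 := by
        rw [hznorm]; exact ne_of_gt hsumpos
      have hcl := mul_right_cancel₀ hnz h2
      rw [hcl]
      exact h1
    have hMaw : M *ᵥ aw = lam • aw := by
      have := hzeq
      rw [hT] at this
      have h2 : e.symm (M *ᵥ aw) = e.symm (lam • aw) := by
        rw [this]; rfl
      exact e.symm.injective h2
    refine ⟨hMaw, ?_⟩
    -- zero entries propagate along edges
    have hprop : ∀ i j : Fin n, aw i = 0 → 0 < A i j → aw j = 0 := by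
      intro i j h0 hA
      have hrow := congrFun hMaw i
      simp only [Pi.smul_apply, smul_eq_mul, h0, mul_zero] at hrow
      have hMi : ∀ k, k ≠ i → M i k = -A i k := by
        intro k hk
        rw [hMeq]
        simp [Matrix.diagonal_apply_ne _ (Ne.symm hk)]
      have hsplit : (M *ᵥ aw) i = M i i * aw i + ∑ k ∈ Finset.univ.erase i, M i k * aw k := by
        simp only [Matrix.mulVec, dotProduct]
        rw [← Finset.add_sum_erase _ _ (Finset.mem_univ i)]
      rw [hsplit, h0, mul_zero, zero_add] at hrow
      have hsum0 : ∑ k ∈ Finset.univ.erase i, A i k * aw k = 0 := by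
        have : ∑ k ∈ Finset.univ.erase i, M i k * aw k
            = -∑ k ∈ Finset.univ.erase i, A i k * aw k := by
          rw [← Finset.sum_neg_distrib]
          exact Finset.sum_congr rfl fun k hk => by
            rw [hMi k (Finset.ne_of_mem_erase hk)]; ring
        rw [this] at hrow
        linarith
      have := (Finset.sum_eq_zero_iff_of_nonneg (fun k _ =>
        mul_nonneg (hnonneg i k) (abs_nonneg _))).mp hsum0
      rcases eq_or_ne j i with hji | hji
      · rw [hji]; exact h0
      · have hj := this j (Finset.mem_erase.mpr ⟨hji, Finset.mem_univ j⟩)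
        rcases mul_eq_zero.mp hj with h | h
        · exact absurd h (ne_of_gt hA)
        · exact h
    have hzero : ∀ i j : Fin n, aw i = 0 → aw j = 0 := by
      intro i j h0
      induction hconn i j with
      | refl => exact h0
      | tail _ hbc ih => exact hprop _ _ ih hbc
    intro i
    rcases eq_or_ne (aw i) 0 with h0 | h0
    · exfalso
      obtain ⟨k, hk⟩ := Function.ne_iff.mp hw
      have := hzero i k h0
      simp only [haw] at this
      exact hk (abs_eq_zero.mp this)
    · exact lt_of_le_of_ne (abs_nonneg _) (Ne.symm h0)
  -- translate x₀ to a plain vector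
  set x' : Fin n → ℝ := e x₀ with hx'
  have hx₀eq : x₀ = e.symm x' := by simp [hx']
  have hx'ne : x' ≠ 0 := by
    intro h
    apply hx₀ne
    rw [hx₀eq, h]
    rfl
  have hMx' : M *ᵥ x' = lam • x' := by
    have := hTx₀
    rw [hx₀eq, hT] at this
    have h2 : e.symm (M *ᵥ x') = e.symm (lam • x') := by rw [this]; rfl
    exact e.symm.injective h2
  have hlampos : 0 < lam := by
    have h1 : lam = (M *ᵥ x') ⬝ᵥ x' := by
      rw [hlam, hx₀eq, hf]
    rw [h1]
    exact hQpos x' hx'ne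
  obtain ⟨hMv, hvpos⟩ := key x' hx'ne hMx'
  set v : Fin n → ℝ := fun i => |x' i| with hv
  refine ⟨lam, v, hlampos, hMv, hvpos, ?_, ?_⟩
  · -- lam is the smallest eigenvalue
    intro μ w hw hMw
    have hQw : (M *ᵥ w) ⬝ᵥ w = μ * ∑ i, w i ^ 2 := by
      rw [hMw]
      simp only [dotProduct, Pi.smul_apply, smul_eq_mul, Finset.mul_sum]
      exact Finset.sum_congr rfl fun i _ => by ring
    have hsumpos : 0 < ∑ i, w i ^ 2 := by
      obtain ⟨k, hk⟩ := Function.ne_iff.mp hw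
      simp only [Pi.zero_apply] at hk
      refine Finset.sum_pos' (fun i _ => sq_nonneg _) ⟨k, Finset.mem_univ k, ?_⟩
      exact sq_abs (w k) ▸ pow_pos (abs_pos.mpr hk) 2
    have h1 := hmin (e.symm w)
    rw [hf, hnorm, hQw] at h1
    exact le_of_mul_le_mul_right h1 hsumpos
  · -- simplicity
    intro w hMw
    set i0 : Fin n := ⟨0, hn⟩ with hi0
    set c : ℝ := w i0 / v i0 with hc
    refine ⟨c, ?_⟩
    set u : Fin n → ℝ := w - c • v with hu
    have hMu : M *ᵥ u = lam • u := by
      rw [hu, Matrix.mulVec_sub, Matrix.mulVec_smul, hMw, hMv]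
      rw [smul_sub, smul_comm]
    have hvne : v i0 ≠ 0 := ne_of_gt (hvpos i0)
    have hui0 : u i0 = 0 := by
      simp only [hu, Pi.sub_apply, Pi.smul_apply, smul_eq_mul, hc]
      rw [div_mul_cancel₀ _ hvne, sub_self]
    have hu0 : u = 0 := by
      by_contra hune
      obtain ⟨_, hupos⟩ := key u hune hMu
      have := hupos i0
      rw [hui0] at this
      simp at this
    have := congrFun hu0
    funext i
    have hi := this i
    simp only [hu, Pi.sub_apply, Pi.zero_apply] at hi
    simp only [Pi.smul_apply, smul_eq_mul]
    have : w i - c * v i = 0 := by simpa using hi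
    linarith
end

section
/- Let L_B = L + D be a perturbed Laplacian of a connected weighted undirected graph (L the graph Laplacian, D a nonzero nonnegative diagonal matrix), with smallest eigenvalue λ₁ > 0 and associated strictly positive eigenvector v. Then for every vertex i with D_{ii} = 0 there exists a neighbor j of i with v_j ≤ v_i, and if v is not constant on the closed neighborhood of i, there is such a neighbor with strictly v_j < v_i. -/
open Matrix

/-- For the perturbed Laplacian `L_B = L + diag b` of a connected weighted undirected
graph, with smallest eigenvalue `lam > 0` and strictly positive eigenvector `v`: every
vertex `i` with `b i = 0` (non-leader) has a neighbor `j` with `v j ≤ v i`; and if `v`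
is not constant on the closed neighborhood of `i`, some neighbor satisfies `v j < v i`. -/
theorem non_leader_has_smaller_neighbor {n : ℕ}
    (A : Matrix (Fin n) (Fin n) ℝ)
    (hsymm : A.IsSymm)
    (hnonneg : ∀ i j, 0 ≤ A i j)
    (hconn : ∀ i j : Fin n, Relation.ReflTransGen (fun a b => 0 < A a b) i j)
    (b : Fin n → ℝ) (hb : ∀ i, 0 ≤ b i) (hbne : b ≠ 0)
    (L : Matrix (Fin n) (Fin n) ℝ)
    (hL : L = Matrix.diagonal (fun i => ∑ j, A i j) - A)
    (lam : ℝ) (v : Fin n → ℝ)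
    (hlam : 0 < lam)
    (hv : (L + Matrix.diagonal b) *ᵥ v = lam • v)
    (hvpos : ∀ i, 0 < v i) :
    ∀ i : Fin n, b i = 0 →
      (∃ j, 0 < A i j ∧ v j ≤ v i) ∧
      ((¬ ∀ j, (0 < A i j ∨ j = i) → v j = v i) → ∃ j, 0 < A i j ∧ v j < v i) := by
  intro i hbi
  have h := congrFun hv i
  simp only [hL, Matrix.add_mulVec, Matrix.sub_mulVec, Matrix.mulVec_diagonal,
    Pi.add_apply, Pi.sub_apply, hbi, zero_mul, add_zero, Pi.smul_apply,
    smul_eq_mul] at h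
  have key : ∑ j, A i j * (v i - v j) = lam * v i := by
    have : (∑ j, A i j) * v i - (A *ᵥ v) i = lam * v i := h
    rw [← this]
    simp [Matrix.mulVec, dotProduct, mul_sub, Finset.sum_sub_distrib,
      Finset.sum_mul]
  have hpos : 0 < ∑ j, A i j * (v i - v j) := by
    rw [key]; exact mul_pos hlam (hvpos i)
  have hex : ∃ j, 0 < A i j ∧ v j < v i := by
    by_contra hc
    push_neg at hc
    have : ∑ j, A i j * (v i - v j) ≤ 0 := by
      apply Finset.sum_nonpos
      intro j _
      rcases lt_or_eq_of_le (hnonneg i j) with hA | hA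
      · have := hc j hA
        have : v i - v j ≤ 0 := by linarith
        exact mul_nonpos_of_nonneg_of_nonpos (le_of_lt hA) this
      · rw [← hA, zero_mul]
    linarith
  obtain ⟨j, hj1, hj2⟩ := hex
  exact ⟨⟨j, hj1, le_of_lt hj2⟩, fun _ => ⟨j, hj1, hj2⟩⟩
end

section
/- Let x(k+1) = W(k)x(k) where each W(k) is a row-stochastic matrix with positive diagonal entries, and suppose each graph induced by the positive entries of W(k) contains a fixed rooted spanning tree with root r for all k, with all positive entries bounded below by some η > 0. Then max_i x_i(k) − min_i x_i(k) → 0 as k → ∞, i.e., the agents reach consensus. -/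
/-!
A row-stochastic matrix whose column `r` is bounded below by `γ` maps a vector with values in
`[m, M]` into `[m + γ (x r - m), M - γ (M - x r)]`, so it contracts the spread `max - min` by the
factor `1 - γ`; with `γ = 0`, every step is non-expansive. In the backward product of `t` steps,
the agents whose weight on the root `r` is at least `η ^ t` keep that property thanks to the
positive diagonal, and while they are not everyone some tree edge leaves their set and adds a new
agent. So after `N = card ι` steps the whole column `r` is at least `η ^ N`, and the spread decays
geometrically, with ratio `1 - η ^ N` per block of `N` steps.
-/

open Matrix Filter Finset

theorem Relation.ReflTransGen.exists_rel_of_not {α : Type*} {R : α → α → Prop} {p : α → Prop}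
    {a b : α} (h : Relation.ReflTransGen R a b) (ha : p a) (hb : ¬p b) :
    ∃ c d, p c ∧ ¬p d ∧ R c d := by
  induction h with
  | refl => exact absurd ha hb
  | @tail c d _ hcd ih =>
    by_cases hc : p c
    · exact ⟨c, d, hc, hb, hcd⟩
    · exact ih hc

theorem tendsto_zero_of_antitone_of_le_mul_shift {s : ℕ → ℝ} {c : ℝ} {N : ℕ} (hN : 0 < N)
    (hs : ∀ k, 0 ≤ s k) (hanti : Antitone s) (hc0 : 0 ≤ c) (hc1 : c < 1)
    (hshift : ∀ k, s (k + N) ≤ c * s k) : Tendsto s atTop (nhds 0) := by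
  have hblock : ∀ j, s (j * N) ≤ c ^ j * s 0 := by
    intro j
    induction j with
    | zero => simp
    | succ j ih =>
      calc s ((j + 1) * N) = s (j * N + N) := by rw [add_one_mul]
        _ ≤ c * s (j * N) := hshift _
        _ ≤ c * (c ^ j * s 0) := mul_le_mul_of_nonneg_left ih hc0
        _ = c ^ (j + 1) * s 0 := by ring
  have hbound : ∀ k, s k ≤ c ^ (k / N) * s 0 :=
    fun k => (hanti (Nat.div_mul_le_self k N)).trans (hblock _)
  have hdiv : Tendsto (fun k => k / N) atTop atTop :=
    tendsto_atTop_atTop.2 fun b => ⟨b * N, fun a ha => (Nat.le_div_iff_mul_le hN).2 ha⟩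
  have hpow : Tendsto (fun k => c ^ (k / N) * s 0) atTop (nhds 0) := by
    simpa using ((tendsto_pow_atTop_nhds_zero_of_lt_one hc0 hc1).comp hdiv).mul_const (s 0)
  exact squeeze_zero hs hbound hpow

section Spread

variable {ι : Type*} [Fintype ι]

def spread (hne : (univ : Finset ι).Nonempty) (x : ι → ℝ) : ℝ :=
  univ.sup' hne x - univ.inf' hne x

theorem spread_nonneg (hne : (univ : Finset ι).Nonempty) (x : ι → ℝ) : 0 ≤ spread hne x := by
  obtain ⟨i, hi⟩ := hne
  exact sub_nonneg.2 ((inf'_le x hi).trans (le_sup' x hi))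

end Spread

namespace Matrix

variable {ι : Type*} [Fintype ι]

theorem single_mul_le_mul_apply {A B : Matrix ι ι ℝ} (hA : ∀ i j, 0 ≤ A i j)
    (hB : ∀ i j, 0 ≤ B i j) (i l j : ι) : A i l * B l j ≤ (A * B) i j :=
  single_le_sum (f := fun l => A i l * B l j) (fun l _ => mul_nonneg (hA i l) (hB l j))
    (mem_univ l)

variable [DecidableEq ι]

theorem mulVec_apply_le_of_mem_rowStochastic {P : Matrix ι ι ℝ} (hP : P ∈ rowStochastic ℝ ι)
    {x : ι → ℝ} {M : ℝ} (hM : ∀ j, x j ≤ M) (i r : ι) :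
    (P *ᵥ x) i ≤ M - P i r * (M - x r) := by
  have hdefect : (P *ᵥ x) i = M - ∑ j, P i j * (M - x j) := by
    simp only [mul_sub, sum_sub_distrib, ← sum_mul, sum_row_of_mem_rowStochastic hP, one_mul,
      mulVec, dotProduct, sub_sub_cancel]
  have hsingle : P i r * (M - x r) ≤ ∑ j, P i j * (M - x j) :=
    single_le_sum (f := fun j => P i j * (M - x j))
      (fun j _ => mul_nonneg (nonneg_of_mem_rowStochastic hP) (sub_nonneg.2 (hM j))) (mem_univ r)
  linarith

theorem le_mulVec_apply_of_mem_rowStochastic {P : Matrix ι ι ℝ} (hP : P ∈ rowStochastic ℝ ι)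
    {x : ι → ℝ} {m : ℝ} (hm : ∀ j, m ≤ x j) (i r : ι) :
    m + P i r * (x r - m) ≤ (P *ᵥ x) i := by
  have := mulVec_apply_le_of_mem_rowStochastic hP (x := -x) (M := -m) (fun j => neg_le_neg (hm j))
    i r
  simp only [mulVec_neg, Pi.neg_apply] at this
  linarith

theorem spread_mulVec_le_of_mem_rowStochastic (hne : (univ : Finset ι).Nonempty)
    {P : Matrix ι ι ℝ} (hP : P ∈ rowStochastic ℝ ι) {r : ι} {γ : ℝ} (hγ : ∀ i, γ ≤ P i r)
    (x : ι → ℝ) : spread hne (P *ᵥ x) ≤ (1 - γ) * spread hne x := by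
  set M := univ.sup' hne x
  set m := univ.inf' hne x
  have hM : ∀ j, x j ≤ M := fun j => le_sup' x (mem_univ j)
  have hm : ∀ j, m ≤ x j := fun j => inf'_le x (mem_univ j)
  have hsup : univ.sup' hne (P *ᵥ x) ≤ M - γ * (M - x r) := sup'_le hne _ fun i _ =>
    calc (P *ᵥ x) i ≤ M - P i r * (M - x r) := mulVec_apply_le_of_mem_rowStochastic hP hM i r
      _ ≤ M - γ * (M - x r) := by gcongr; exacts [sub_nonneg.2 (hM r), hγ i]
  have hinf : m + γ * (x r - m) ≤ univ.inf' hne (P *ᵥ x) := le_inf' hne _ fun i _ =>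
    calc m + γ * (x r - m) ≤ m + P i r * (x r - m) := by gcongr; exacts [sub_nonneg.2 (hm r), hγ i]
      _ ≤ (P *ᵥ x) i := le_mulVec_apply_of_mem_rowStochastic hP hm i r
  rw [spread, spread]
  linarith

/-- `backwardProd W k t = W (k + t - 1) * ⋯ * W k`, the transition matrix from time `k` to
time `k + t`. -/
def backwardProd (W : ℕ → Matrix ι ι ℝ) (k : ℕ) : ℕ → Matrix ι ι ℝ
  | 0 => 1
  | t + 1 => W (k + t) * backwardProd W k t

theorem backwardProd_mem_rowStochastic {W : ℕ → Matrix ι ι ℝ}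
    (hW : ∀ k, W k ∈ rowStochastic ℝ ι) (k t : ℕ) : backwardProd W k t ∈ rowStochastic ℝ ι := by
  induction t with
  | zero => exact one_mem _
  | succ t ih => exact mul_mem (hW _) ih

theorem eq_backwardProd_mulVec {W : ℕ → Matrix ι ι ℝ} {x : ℕ → ι → ℝ}
    (hx : ∀ k, x (k + 1) = W k *ᵥ x k) (k t : ℕ) : x (k + t) = backwardProd W k t *ᵥ x k := by
  induction t with
  | zero => simp [backwardProd]
  | succ t ih => rw [← add_assoc, hx, ih, backwardProd, mulVec_mulVec]

section Growth

variable {A B : Matrix ι ι ℝ} {η γ : ℝ} {r : ι}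

theorem min_card_add_one_le_card_filter_mul_apply (hA : ∀ i j, 0 ≤ A i j)
    (hdiag : ∀ i, η ≤ A i i) (hpos : ∀ i j, A i j ≠ 0 → η ≤ A i j)
    (htree : ∀ i, Relation.ReflTransGen (fun a b => 0 < A b a) r i)
    (hB : ∀ i j, 0 ≤ B i j) (hγ : 0 ≤ γ) (hr : γ ≤ B r r) :
    min (#{i | γ ≤ B i r} + 1) (Fintype.card ι) ≤ #{i | η * γ ≤ (A * B) i r} := by
  set S := ({i | γ ≤ B i r} : Finset ι)
  set S' := ({i | η * γ ≤ (A * B) i r} : Finset ι)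
  have hstep : ∀ {i a}, η ≤ A i a → a ∈ S → η * γ ≤ (A * B) i r := fun hia ha =>
    (mul_le_mul hia (mem_filter.1 ha).2 hγ (hA _ _)).trans (single_mul_le_mul_apply hA hB _ _ _)
  have hsub : S ⊆ S' := fun i hi => mem_filter.2 ⟨mem_univ i, hstep (hdiag i) hi⟩
  rcases eq_or_ne S univ with hS | hS
  · exact (min_le_right _ _).trans (card_univ (α := ι) ▸ hS ▸ card_le_card hsub)
  obtain ⟨b, -, hb⟩ := exists_of_ssubset (ssubset_univ_iff.2 hS)
  -- the tree path from `r` to `b` leaves `S` along some edge `a → c`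
  obtain ⟨a, c, ha, hc, hac⟩ :=
    (htree b).exists_rel_of_not (p := (· ∈ S)) (by simpa [S] using hr) hb
  have hc' : c ∈ S' := mem_filter.2 ⟨mem_univ c, hstep (hpos c a hac.ne') ha⟩
  exact (min_le_left _ _).trans (card_insert_of_notMem hc ▸ card_le_card (insert_subset hc' hsub))

variable {W : ℕ → Matrix ι ι ℝ} (hW : ∀ k, W k ∈ rowStochastic ℝ ι) (hη : 0 ≤ η)
  (hdiag : ∀ k i, η ≤ W k i i)
include hW hη hdiag

theorem pow_le_backwardProd_apply_self (k t : ℕ) (i : ι) : η ^ t ≤ backwardProd W k t i i := by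
  induction t with
  | zero => simp [backwardProd]
  | succ t ih =>
    calc η ^ (t + 1) = η * η ^ t := pow_succ' η t
      _ ≤ W (k + t) i i * backwardProd W k t i i :=
        mul_le_mul (hdiag _ i) ih (pow_nonneg hη t) (nonneg_of_mem_rowStochastic (hW _))
      _ ≤ backwardProd W k (t + 1) i i :=
        single_mul_le_mul_apply (A := W (k + t)) (B := backwardProd W k t)
          (fun _ _ => nonneg_of_mem_rowStochastic (hW _))
          (fun _ _ => nonneg_of_mem_rowStochastic (backwardProd_mem_rowStochastic hW k t)) _ _ _

variable (hpos : ∀ k i j, W k i j ≠ 0 → η ≤ W k i j)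
  (htree : ∀ k i, Relation.ReflTransGen (fun a b => 0 < W k b a) r i)
include hpos htree

theorem min_le_card_filter_pow_le_backwardProd_apply (k t : ℕ) :
    min (t + 1) (Fintype.card ι) ≤ #{i | η ^ t ≤ backwardProd W k t i r} := by
  induction t with
  | zero =>
    refine (min_le_left _ _).trans (card_pos.2 ⟨r, ?_⟩)
    simp [backwardProd]
  | succ t ih =>
    have hstep := min_card_add_one_le_card_filter_mul_apply (A := W (k + t))
      (B := backwardProd W k t) (fun _ _ => nonneg_of_mem_rowStochastic (hW (k + t)))
      (hdiag (k + t)) (hpos (k + t)) (htree (k + t))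
      (fun _ _ => nonneg_of_mem_rowStochastic (backwardProd_mem_rowStochastic hW k t))
      (pow_nonneg hη t) (pow_le_backwardProd_apply_self hW hη hdiag k t r)
    rw [← pow_succ'] at hstep
    exact le_trans (by omega) hstep

theorem pow_card_le_backwardProd_apply (k : ℕ) (i : ι) :
    η ^ Fintype.card ι ≤ backwardProd W k (Fintype.card ι) i r := by
  have hcard := min_le_card_filter_pow_le_backwardProd_apply hW hη hdiag hpos htree k
    (Fintype.card ι)
  have hall :
      ({i | η ^ Fintype.card ι ≤ backwardProd W k (Fintype.card ι) i r} : Finset ι) = univ :=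
    eq_univ_of_card _ ((card_le_univ _).antisymm (by omega))
  simpa using eq_univ_iff_forall.1 hall i

end Growth

end Matrix

theorem time_varying_consensus_general {n : ℕ}
    (hne : (Finset.univ : Finset (Fin n)).Nonempty)
    (W : ℕ → Matrix (Fin n) (Fin n) ℝ) (η : ℝ) (hη : 0 < η)
    (hnonneg : ∀ k i j, 0 ≤ W k i j)
    (hrow : ∀ k i, ∑ j, W k i j = 1)
    (hdiag : ∀ k i, η ≤ W k i i)
    (hlb : ∀ k i j, W k i j ≠ 0 → η ≤ W k i j)
    (r : Fin n)
    (htree : ∀ k i, Relation.ReflTransGen (fun a b => 0 < W k b a) r i)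
    (x : ℕ → Fin n → ℝ)
    (hx : ∀ k, x (k + 1) = W k *ᵥ x k) :
    Tendsto (fun k => Finset.univ.sup' hne (x k) - Finset.univ.inf' hne (x k))
      atTop (nhds 0) := by
  have hW : ∀ k, W k ∈ rowStochastic ℝ (Fin n) :=
    fun k => mem_rowStochastic_iff_sum.2 ⟨hnonneg k, hrow k⟩
  have hη1 : η ≤ 1 := (hdiag 0 r).trans (le_one_of_mem_rowStochastic (hW 0))
  change Tendsto (fun k => spread hne (x k)) atTop (nhds 0)
  refine tendsto_zero_of_antitone_of_le_mul_shift (c := 1 - η ^ Fintype.card (Fin n))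
    (Fintype.card_pos_iff.2 ⟨r⟩)
    (fun k => spread_nonneg hne (x k)) (antitone_nat_of_succ_le fun k => ?_)
    (sub_nonneg.2 (pow_le_one₀ hη.le hη1)) (sub_lt_self 1 (pow_pos hη _)) fun k => ?_
  · simpa only [hx k, sub_zero, one_mul] using spread_mulVec_le_of_mem_rowStochastic hne (hW k)
      (fun _ => nonneg_of_mem_rowStochastic (hW k) (j := r)) (x k)
  · rw [eq_backwardProd_mulVec hx]
    exact spread_mulVec_le_of_mem_rowStochastic hne (backwardProd_mem_rowStochastic hW k _)
      (pow_card_le_backwardProd_apply hW hη.le hdiag hlb htree k) (x k)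

/-- Time-varying consensus: row-stochastic matrices with positive diagonal, all positive
entries bounded below by `η > 0`, whose induced graphs all contain a spanning tree rooted
at a fixed root `r`, drive the states to consensus: the spread `max − min` tends to 0. -/
theorem time_varying_consensus {n : ℕ} (hn : 0 < n)
    (hne : (Finset.univ : Finset (Fin n)).Nonempty)
    (W : ℕ → Matrix (Fin n) (Fin n) ℝ) (η : ℝ) (hη : 0 < η)
    (hnonneg : ∀ k i j, 0 ≤ W k i j)
    (hrow : ∀ k i, ∑ j, W k i j = 1)
    (hdiag : ∀ k i, η ≤ W k i i)
    (hlb : ∀ k i j, W k i j ≠ 0 → η ≤ W k i j)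
    (r : Fin n)
    (htree : ∀ k i, Relation.ReflTransGen (fun a b => 0 < W k b a) r i)
    (x : ℕ → Fin n → ℝ)
    (hx : ∀ k, x (k + 1) = W k *ᵥ x k) :
    Tendsto (fun k => Finset.univ.sup' hne (x k) - Finset.univ.inf' hne (x k))
      atTop (nhds 0) :=
  time_varying_consensus_general hne W η hη hnonneg hrow hdiag hlb r htree x hx
end

section
/- Let v be the strictly positive eigenvector of the perturbed Laplacian L_B = L + D of a connected weighted undirected graph associated with its smallest eigenvalue λ₁ > 0, where D_{ii} > 0 only at the leader vertex r. Suppose each non-leader vertex i selects exactly one in-neighbor j(i) among its graph neighbors satisfying v_{j(i)} < v_i. Then the resulting directed graph (edges j(i) → i for each non-leader i) contains a spanning tree rooted at r. -/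
theorem reflTransGen_root_of_selection_descends {α β : Type*} [Finite α] [Preorder β]
    {f : α → β} {r : α} {sel : α → α} (hdesc : ∀ i, i ≠ r → f (sel i) < f i) (i : α) :
    Relation.ReflTransGen (fun a c => c ≠ r ∧ sel c = a) r i := by
  have : IsTrans α (fun a b => f a < f b) := ⟨fun _ _ _ => lt_trans⟩
  have : Std.Irrefl (fun a b => f a < f b) := ⟨fun a => lt_irrefl (f a)⟩
  induction i using (Finite.wellFounded_of_trans_of_irrefl fun a b => f a < f b).induction with
  | _ i ih =>
    by_cases hir : i = r
    · exact hir ▸ .refl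
    · exact (ih (sel i) (hdesc i hir)).tail ⟨hir, rfl⟩

open Matrix

theorem selection_gives_rooted_spanning_tree_general {n : ℕ}
    (A : Matrix (Fin n) (Fin n) ℝ)
    (r : Fin n)
    (v : Fin n → ℝ)
    (sel : Fin n → Fin n)
    (hsel : ∀ i, i ≠ r → 0 < A i (sel i) ∧ v (sel i) < v i) :
    ∀ i : Fin n,
      Relation.ReflTransGen (fun a c => c ≠ r ∧ sel c = a) r i :=
  reflTransGen_root_of_selection_descends fun i hi => (hsel i hi).2

/-- Let `v` be the strictly positive eigenvector of the perturbed Laplacian `L + diag b`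
of a connected weighted undirected graph for its smallest eigenvalue `lam > 0`, where `b`
is supported only at the leader `r`. If each non-leader vertex `i` selects exactly one
graph neighbor `sel i` with `v (sel i) < v i`, then the directed graph with edges
`sel i → i` contains a spanning tree rooted at `r`. -/
theorem selection_gives_rooted_spanning_tree {n : ℕ}
    (A : Matrix (Fin n) (Fin n) ℝ)
    (hsymm : A.IsSymm)
    (hpos : ∀ i j, 0 ≤ A i j)
    (hconn : ∀ i j : Fin n, Relation.ReflTransGen (fun a b => 0 < A a b) i j)
    (r : Fin n) (b : Fin n → ℝ)
    (hbr : 0 < b r) (hb0 : ∀ i, i ≠ r → b i = 0)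
    (L : Matrix (Fin n) (Fin n) ℝ)
    (hL : L = Matrix.diagonal (fun i => ∑ j, A i j) - A)
    (lam : ℝ) (v : Fin n → ℝ)
    (hlam : 0 < lam)
    (hmin : ∀ (μ : ℝ) (w : Fin n → ℝ), w ≠ 0 →
      (L + Matrix.diagonal b) *ᵥ w = μ • w → lam ≤ μ)
    (hv : (L + Matrix.diagonal b) *ᵥ v = lam • v)
    (hvpos : ∀ i, 0 < v i)
    (sel : Fin n → Fin n)
    (hsel : ∀ i, i ≠ r → 0 < A i (sel i) ∧ v (sel i) < v i) :
    ∀ i : Fin n,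
      Relation.ReflTransGen (fun a c => c ≠ r ∧ sel c = a) r i :=
  selection_gives_rooted_spanning_tree_general A r v sel hsel
end

section
/- Let W(k), k = 0, 1, 2, …, be row-stochastic matrices with positive diagonals and positive entries bounded below by η > 0, such that for each k the graph induced by W(k) contains a rooted spanning tree (possibly with different roots). Suppose further that the matrices W(k) change only at finitely many time instants on each bounded interval and that on each interval between changes, the same W is applied for at least n−1 consecutive steps. Then the diameter of the state set, max_i x_i(k) − min_i x_i(k), is non-increasing and converges to 0. -/
open Matrix Filter

noncomputable instance switched_fstep_dec {n : ℕ} (W : Matrix (Fin n) (Fin n) ℝ)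
    (A : Finset (Fin n)) : DecidablePred (fun i : Fin n => ∃ j ∈ A, 0 < W i j) :=
  fun _ => inferInstance

/-- One step of reachability expansion. -/
noncomputable def switched_fstep {n : ℕ} (W : Matrix (Fin n) (Fin n) ℝ) (A : Finset (Fin n)) :
    Finset (Fin n) :=
  A ∪ Finset.univ.filter (fun i : Fin n => ∃ j ∈ A, 0 < W i j)

lemma switched_subset_fstep {n : ℕ} (W : Matrix (Fin n) (Fin n) ℝ) (A : Finset (Fin n)) :
    A ⊆ switched_fstep W A :=
  Finset.subset_union_left

lemma switched_mem_iter_fstep {n : ℕ} (W : Matrix (Fin n) (Fin n) ℝ) (r i : Fin n)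
    (h : Relation.ReflTransGen (fun a b => 0 < W b a) r i) :
    i ∈ (switched_fstep W)^[n - 1] {r} := by
  have hn : 0 < n := Fin.pos r
  -- the iterate at step n-1 is a fixed point
  have key2 : ∀ s, switched_fstep W ((switched_fstep W)^[s] {r}) = (switched_fstep W)^[s] {r}
      ∨ s + 1 ≤ ((switched_fstep W)^[s] ({r} : Finset (Fin n))).card := by
    intro s
    induction s with
    | zero => right; simp
    | succ s ih =>
      rcases ih with h' | h'
      · left
        rw [Function.iterate_succ_apply', h', h']
      · by_cases hf : switched_fstep W ((switched_fstep W)^[s] {r}) = (switched_fstep W)^[s] {r}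
        · left
          rw [Function.iterate_succ_apply', hf, hf]
        · right
          rw [Function.iterate_succ_apply']
          have hss : (switched_fstep W)^[s] ({r} : Finset (Fin n)) ⊂
              switched_fstep W ((switched_fstep W)^[s] {r}) :=
            (Finset.ssubset_iff_subset_ne).mpr ⟨switched_subset_fstep _ _, Ne.symm hf⟩
          have := Finset.card_lt_card hss
          omega
  have hfix : switched_fstep W ((switched_fstep W)^[n - 1] {r}) = (switched_fstep W)^[n - 1] {r} := by
    rcases key2 (n - 1) with h' | h'
    · exact h'
    · have hcard : ((switched_fstep W)^[n - 1] ({r} : Finset (Fin n))).card = n := by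
        have hle : ((switched_fstep W)^[n - 1] ({r} : Finset (Fin n))).card ≤ n := by
          simpa using Finset.card_le_card ((switched_fstep W)^[n - 1] ({r} : Finset (Fin n))).subset_univ
        omega
      have huniv : (switched_fstep W)^[n - 1] ({r} : Finset (Fin n)) = Finset.univ := by
        apply Finset.eq_univ_of_card
        simpa using hcard
      rw [huniv]
      exact Finset.Subset.antisymm (Finset.subset_univ _) (switched_subset_fstep _ _)
  -- monotone: {r} ⊆ iterate
  have hr0 : r ∈ (switched_fstep W)^[n - 1] ({r} : Finset (Fin n)) := by
    have : ∀ s, r ∈ (switched_fstep W)^[s] ({r} : Finset (Fin n)) := by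
      intro s
      induction s with
      | zero => simp
      | succ s ih =>
        rw [Function.iterate_succ_apply']
        exact switched_subset_fstep _ _ ih
    exact this _
  induction h with
  | refl => exact hr0
  | @tail b c hb hbc ih =>
    rw [← hfix]
    refine Finset.mem_union_right _ (Finset.mem_filter.mpr ⟨Finset.mem_univ _, ⟨b, ih, hbc⟩⟩)

lemma switched_mulVec_le {n : ℕ} (W : Matrix (Fin n) (Fin n) ℝ)
    (hnonneg : ∀ i j, 0 ≤ W i j) (hrow : ∀ i, ∑ j, W i j = 1)
    (v : Fin n → ℝ) (S : ℝ) (h : ∀ j, v j ≤ S) (i : Fin n) : (W *ᵥ v) i ≤ S := by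
  have hexp : (W *ᵥ v) i = ∑ j, W i j * v j := rfl
  rw [hexp]
  calc ∑ j, W i j * v j ≤ ∑ j, W i j * S :=
        Finset.sum_le_sum fun j _ => mul_le_mul_of_nonneg_left (h j) (hnonneg i j)
    _ = (∑ j, W i j) * S := by rw [Finset.sum_mul]
    _ = S := by rw [hrow, one_mul]

/-- Key contraction lemma: after n-1 steps with a fixed matrix with a rooted spanning tree,
every coordinate is pulled toward the root's initial value. -/
lemma switched_key {n : ℕ} (W : Matrix (Fin n) (Fin n) ℝ) (η : ℝ) (hη : 0 < η)
    (hnonneg : ∀ i j, 0 ≤ W i j) (hrow : ∀ i, ∑ j, W i j = 1)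
    (hdiag : ∀ i, η ≤ W i i) (hlb : ∀ i j, W i j ≠ 0 → η ≤ W i j)
    (r : Fin n) (hr : ∀ i, Relation.ReflTransGen (fun a b => 0 < W b a) r i)
    (y : ℕ → Fin n → ℝ) (hy : ∀ s, s < n - 1 → y (s + 1) = W *ᵥ y s)
    (S : ℝ) (hS : ∀ i, y 0 i ≤ S) :
    ∀ i, y (n - 1) i ≤ S - η ^ (n - 1) * (S - y 0 r) := by
  have h0 : 0 ≤ S - y 0 r := sub_nonneg.mpr (hS r)
  have main : ∀ s, s ≤ n - 1 → ∀ i, y s i ≤ S ∧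
      (i ∈ (switched_fstep W)^[s] {r} → y s i ≤ S - η ^ s * (S - y 0 r)) := by
    intro s
    induction s with
    | zero =>
      intro _ i
      refine ⟨hS i, ?_⟩
      intro hi
      simp only [Function.iterate_zero, id, Finset.mem_singleton] at hi
      subst hi
      simp
    | succ s ih =>
      intro hs i
      have hlt : s < n - 1 := hs
      have IH := ih (le_of_lt hlt)
      have hys := hy s hlt
      constructor
      · rw [hys]
        exact switched_mulVec_le W hnonneg hrow _ S (fun j => (IH j).1) i
      · intro hi
        rw [Function.iterate_succ_apply'] at hi
        have hj : ∃ j ∈ (switched_fstep W)^[s] ({r} : Finset (Fin n)), 0 < W i j := by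
          rcases Finset.mem_union.mp hi with h' | h'
          · exact ⟨i, h', lt_of_lt_of_le hη (hdiag i)⟩
          · exact (Finset.mem_filter.mp h').2
        obtain ⟨j, hjA, hjpos⟩ := hj
        have hWij : η ≤ W i j := hlb i j (ne_of_gt hjpos)
        have hyj := (IH j).2 hjA
        have hexp : y (s + 1) i = ∑ k, W i k * y s k := by rw [hys]; rfl
        have hsplit : ∑ k, W i k * y s k
            = W i j * y s j + ∑ k ∈ Finset.univ.erase j, W i k * y s k :=
          (Finset.add_sum_erase _ _ (Finset.mem_univ j)).symm
        have hrowsplit : W i j + ∑ k ∈ Finset.univ.erase j, W i k = 1 := by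
          rw [Finset.add_sum_erase _ _ (Finset.mem_univ j)]
          exact hrow i
        have hrest : ∑ k ∈ Finset.univ.erase j, W i k * y s k
            ≤ (∑ k ∈ Finset.univ.erase j, W i k) * S := by
          rw [Finset.sum_mul]
          exact Finset.sum_le_sum fun k _ => mul_le_mul_of_nonneg_left ((IH k).1) (hnonneg i k)
        have h3 : η * (η ^ s * (S - y 0 r)) ≤ W i j * (S - y s j) := by
          apply mul_le_mul hWij (by linarith) (mul_nonneg (pow_nonneg hη.le s) h0) (hnonneg i j)
        have hps : η ^ (s + 1) = η * η ^ s := by ring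
        have hR : ∑ k ∈ Finset.univ.erase j, W i k = 1 - W i j := by linarith
        rw [hR] at hrest
        rw [hexp, hsplit, hps]
        nlinarith [hrest, h3]
  intro i
  exact (main (n - 1) le_rfl i).2 (switched_mem_iter_fstep W r i (hr i))

/-- Switched consensus: row-stochastic matrices with positive diagonals, nonzero entries
bounded below by `η > 0`, each containing a rooted spanning tree (roots may differ), with
switchings occurring at instants `t m` and each matrix applied for at least `n − 1`
consecutive steps. Then the spread `max − min` is non-increasing and tends to 0. -/
theorem switched_consensus {n : ℕ} (hn : 0 < n)
    (hne : (Finset.univ : Finset (Fin n)).Nonempty)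
    (W : ℕ → Matrix (Fin n) (Fin n) ℝ) (η : ℝ) (hη : 0 < η)
    (hnonneg : ∀ k i j, 0 ≤ W k i j)
    (hrow : ∀ k i, ∑ j, W k i j = 1)
    (hdiag : ∀ k i, η ≤ W k i i)
    (hlb : ∀ k i j, W k i j ≠ 0 → η ≤ W k i j)
    (htree : ∀ k, ∃ r : Fin n, ∀ i : Fin n,
      Relation.ReflTransGen (fun a b => 0 < W k b a) r i)
    (t : ℕ → ℕ) (ht0 : t 0 = 0) (htmono : StrictMono t)
    (hdwell : ∀ m, n - 1 ≤ t (m + 1) - t m)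
    (hconst : ∀ m k, t m ≤ k → k < t (m + 1) → W k = W (t m))
    (x : ℕ → Fin n → ℝ)
    (hx : ∀ k, x (k + 1) = W k *ᵥ x k) :
    Antitone (fun k => Finset.univ.sup' hne (x k) - Finset.univ.inf' hne (x k)) ∧
    Tendsto (fun k => Finset.univ.sup' hne (x k) - Finset.univ.inf' hne (x k))
      atTop (nhds 0) := by
  set D : ℕ → ℝ := fun k => Finset.univ.sup' hne (x k) - Finset.univ.inf' hne (x k) with hD
  -- basic facts
  have hle1 : η ≤ 1 := by
    obtain ⟨i, _⟩ := hne
    have h1 := hdiag 0 i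
    have h2 : W 0 i i ≤ ∑ j, W 0 i j :=
      Finset.single_le_sum (fun j _ => hnonneg 0 i j) (Finset.mem_univ i)
    rw [hrow 0 i] at h2
    linarith
  -- step bounds on sup and inf
  have hsupstep : ∀ k, Finset.univ.sup' hne (x (k + 1)) ≤ Finset.univ.sup' hne (x k) := by
    intro k
    apply Finset.sup'_le
    intro i _
    rw [hx k]
    exact switched_mulVec_le (W k) (hnonneg k) (hrow k) (x k) _
      (fun j => Finset.le_sup' (x k) (Finset.mem_univ j)) i
  have hinfstep : ∀ k, Finset.univ.inf' hne (x k) ≤ Finset.univ.inf' hne (x (k + 1)) := by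
    intro k
    apply Finset.le_inf'
    intro i _
    rw [hx k]
    have := switched_mulVec_le (W k) (hnonneg k) (hrow k) (-(x k))
      (-(Finset.univ.inf' hne (x k)))
      (fun j => neg_le_neg (Finset.inf'_le (x k) (Finset.mem_univ j))) i
    rw [Matrix.mulVec_neg] at this
    simpa using neg_le_neg this
  have hanti : Antitone D := by
    apply antitone_nat_of_succ_le
    intro k
    have := hsupstep k
    have := hinfstep k
    simp only [hD]
    linarith
  have hD0 : ∀ k, 0 ≤ D k := by
    intro k
    simp only [hD]
    obtain ⟨i, _⟩ := hne
    have h1 := Finset.inf'_le (x k) (Finset.mem_univ i)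
    have h2 := Finset.le_sup' (x k) (Finset.mem_univ i)
    linarith
  set q : ℝ := 1 - η ^ (n - 1) with hq
  have hc0 : 0 < η ^ (n - 1) := pow_pos hη _
  have hc1 : η ^ (n - 1) ≤ 1 := pow_le_one₀ hη.le hle1
  have hq0 : 0 ≤ q := by simp only [hq]; linarith
  have hq1 : q < 1 := by simp only [hq]; linarith
  -- contraction over each dwell interval
  have hcontr : ∀ m, D (t (m + 1)) ≤ q * D (t m) := by
    intro m
    set k0 := t m with hk0
    have hk1 : k0 + (n - 1) ≤ t (m + 1) := by
      have h1 := hdwell m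
      have h2 : k0 ≤ t (m + 1) := (htmono (Nat.lt_succ_self m)).le
      omega
    obtain ⟨r, hr⟩ := htree k0
    set S := Finset.univ.sup' hne (x k0) with hS
    set I := Finset.univ.inf' hne (x k0) with hI
    have hWc : ∀ s, s < n - 1 → W (k0 + s) = W k0 := by
      intro s hs
      exact hconst m (k0 + s) (Nat.le_add_right _ _) (by omega)
    have hy : ∀ s, s < n - 1 → x (k0 + (s + 1)) = W k0 *ᵥ x (k0 + s) := by
      intro s hs
      show x ((k0 + s) + 1) = W k0 *ᵥ x (k0 + s)
      rw [hx (k0 + s), hWc s hs]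
    -- upper bound
    have hup := switched_key (W k0) η hη (hnonneg k0) (hrow k0) (hdiag k0) (hlb k0) r hr
      (fun s => x (k0 + s)) hy S (fun i => Finset.le_sup' (x k0) (Finset.mem_univ i))
    -- lower bound via negation
    have hlow := switched_key (W k0) η hη (hnonneg k0) (hrow k0) (hdiag k0) (hlb k0) r hr
      (fun s => -(x (k0 + s)))
      (fun s hs => by
        show -x (k0 + (s + 1)) = W k0 *ᵥ -x (k0 + s)
        rw [hy s hs, Matrix.mulVec_neg]) (-I)
      (fun i => neg_le_neg (Finset.inf'_le (x k0) (Finset.mem_univ i)))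
    simp only [Pi.neg_apply, Nat.add_zero] at hlow
    have hxr_le : x k0 r ≤ S := Finset.le_sup' (x k0) (Finset.mem_univ r)
    have hxr_ge : I ≤ x k0 r := Finset.inf'_le (x k0) (Finset.mem_univ r)
    have hsup2 : Finset.univ.sup' hne (x (k0 + (n - 1)))
        ≤ S - η ^ (n - 1) * (S - x k0 r) :=
      Finset.sup'_le _ _ fun i _ => hup i
    have hinf2 : I + η ^ (n - 1) * (x k0 r - I) ≤ Finset.univ.inf' hne (x (k0 + (n - 1))) := by
      apply Finset.le_inf'
      intro i _
      have := hlow i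
      linarith
    have hDmid : D (k0 + (n - 1)) ≤ q * D k0 := by
      simp only [hD, hq]
      have : q * D k0 = (1 - η ^ (n - 1)) * (S - I) := by simp [hD, hq, hS, hI]
      nlinarith [hsup2, hinf2]
    calc D (t (m + 1)) ≤ D (k0 + (n - 1)) := hanti hk1
      _ ≤ q * D (t m) := hDmid
  -- geometric decay along switching times
  have hDt : ∀ m, D (t m) ≤ q ^ m * D 0 := by
    intro m
    induction m with
    | zero => simp [ht0]
    | succ m ih =>
      calc D (t (m + 1)) ≤ q * D (t m) := hcontr m
        _ ≤ q * (q ^ m * D 0) := mul_le_mul_of_nonneg_left ih hq0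
        _ = q ^ (m + 1) * D 0 := by ring
  refine ⟨hanti, ?_⟩
  have hbdd : BddBelow (Set.range D) := ⟨0, by rintro _ ⟨k, rfl⟩; exact hD0 k⟩
  have htend := tendsto_atTop_ciInf hanti hbdd
  have hiInf : ⨅ k, D k = 0 := by
    refine le_antisymm ?_ (le_ciInf fun k => hD0 k)
    have hlim : Tendsto (fun m => q ^ m * D 0) atTop (nhds 0) := by
      have := (tendsto_pow_atTop_nhds_zero_of_lt_one hq0 hq1).mul_const (D 0)
      simpa using this
    exact ge_of_tendsto' hlim (fun m => (ciInf_le hbdd (t m)).trans (hDt m))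
  rw [hiInf] at htend
  exact htend
end
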